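/- Type awareness does not help the eavesdropper: Let 𝒳, 𝒵 be finite alphabets, d_E : 𝒳×𝒵 → [0,∞) a distortion measure, D ≥ 0, and for each n let (X_n, Y_n) be a pair of random variables with X_n taking values in 𝒳^n and Y_n taking values in a finite set 𝒴_n. Then for every n and every genie-aided eavesdropper σ̃ : 𝒴_n × 𝒫_n(𝒳) → 𝒵^n there exists a plain eavesdropper σ : 𝒴_n → 𝒵^n with P[ d_E(X_n, σ(Y_n)) ≤ D ] ≥ |𝒫_n(𝒳)|^{-1} · P[ d_E(X_n, σ̃(Y_n, Q̂_{X_n})) ≤ D ]. Consequently, since |𝒫_n(𝒳)| ≤ (n+1)^{|𝒳|}, the liminf (respectively limsup) of −(1/n) log₂ of the maximal exiguous-distortion probability max_σ P[d_E(X_n,σ(Y_n)) ≤ D] over plain eavesdroppers equals the corresponding quantity maximized over genie-aided eavesdroppers σ̃ : 𝒴_n × 𝒫_n(𝒳) → 𝒵^n. -/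

import Mathlib

/-! A genie-aided eavesdropper `σg` can be replaced by the plain eavesdropper `y ↦ σg y Q` for a
single well-chosen type `Q`: summing the success probabilities of these `|𝒫_n(𝒳)|` plain
eavesdroppers already dominates the success probability of `σg`, so the best of them achieves at
least a `1 / |𝒫_n(𝒳)|` fraction of it. Since `|𝒫_n(𝒳)| ≤ (n + 1) ^ |𝒳|`, the optimal success
probabilities of the two kinds of eavesdroppers differ by a factor whose normalized logarithm
`|𝒳| log₂ (n + 1) / n` tends to `0`, so the exponents have the same liminf and limsup. -/

open scoped BigOperators

noncomputable section

open Classical in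
/-- Indicator of a proposition, as a real number. -/
def ind (p : Prop) : ℝ := if p then 1 else 0

/-- Average per-letter distortion between sequences. -/
def seqDist {A B : Type*} (d : A → B → ℝ) {n : ℕ} (x : Fin n → A) (z : Fin n → B) : ℝ :=
  (n : ℝ)⁻¹ * ∑ i, d (x i) (z i)

/-- Empirical distribution (type) of a sequence. -/
def empDist {A : Type*} [Fintype A] [DecidableEq A] {n : ℕ} (x : Fin n → A) : A → ℝ :=
  fun a => ((Finset.univ.filter fun i => x i = a).card : ℝ) / n

/-- `p` is a probability distribution on a finite alphabet. -/
def IsDist {A : Type*} [Fintype A] (p : A → ℝ) : Prop :=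
  (∀ a, 0 ≤ p a) ∧ ∑ a, p a = 1

/-- The set of types of length-`n` sequences over `A`. -/
def typeSet (A : Type*) [Fintype A] [DecidableEq A] (n : ℕ) : Set (A → ℝ) :=
  {Q | ∃ x : Fin n → A, empDist x = Q}

open Filter Topology

lemma ind_nonneg (p : Prop) : 0 ≤ ind p := by
  unfold ind; split <;> norm_num

lemma typeSet_subset_range (A : Type*) [Fintype A] [DecidableEq A] (n : ℕ) :
    typeSet A n ⊆ Set.range fun c : A → Fin (n + 1) => fun a => (c a : ℝ) / n := by
  rintro _ ⟨x, rfl⟩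
  refine ⟨fun a => ⟨_, Nat.lt_succ_of_le ?_⟩, rfl⟩
  exact (Finset.card_filter_le _ _).trans_eq (Finset.card_fin n)

instance (A : Type*) [Fintype A] [DecidableEq A] (n : ℕ) : Finite (typeSet A n) :=
  ((Set.finite_range _).subset (typeSet_subset_range A n)).to_subtype

lemma ncard_typeSet_le (A : Type*) [Fintype A] [DecidableEq A] (n : ℕ) :
    (typeSet A n).ncard ≤ (n + 1) ^ Fintype.card A :=
  calc (typeSet A n).ncard
      ≤ (Set.range fun c : A → Fin (n + 1) => fun a => (c a : ℝ) / n).ncard :=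
        Set.ncard_le_ncard (typeSet_subset_range A n) (Set.finite_range _)
    _ ≤ Nat.card (A → Fin (n + 1)) := by
        rw [← Nat.card_coe_set_eq]; exact Finite.card_range_le _
    _ = (n + 1) ^ Fintype.card A := by simp

section SideInformation

variable {ι Y K Z : Type*} [Fintype ι] {r : ι → Z → ℝ}

lemma exists_sum_side_le_natCard_mul_sum [Finite K] [Nonempty Z] (hr : ∀ i z, 0 ≤ r i z)
    (y : ι → Y) (k : ι → K) (σg : Y → K → Z) :
    ∃ σ : Y → Z, ∑ i, r i (σg (y i) (k i)) ≤ Nat.card K * ∑ i, r i (σ (y i)) := by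
  have := Fintype.ofFinite K
  rcases isEmpty_or_nonempty K with hK | hK
  · have : IsEmpty ι := ⟨fun i => isEmptyElim (k i)⟩
    exact ⟨fun _ => Classical.arbitrary Z, by simp⟩
  obtain ⟨κ, hκ⟩ := Finite.exists_max fun κ => ∑ i, r i (σg (y i) κ)
  refine ⟨fun y => σg y κ, ?_⟩
  calc ∑ i, r i (σg (y i) (k i)) ≤ ∑ i, ∑ κ', r i (σg (y i) κ') :=
        Finset.sum_le_sum fun i _ =>
          Finset.single_le_sum (fun κ' _ => hr i (σg (y i) κ')) (Finset.mem_univ (k i))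
    _ = ∑ κ', ∑ i, r i (σg (y i) κ') := Finset.sum_comm
    _ ≤ ∑ _κ' : K, ∑ i, r i (σg (y i) κ) := Finset.sum_le_sum fun κ' _ => hκ κ'
    _ = Nat.card K * ∑ i, r i (σg (y i) κ) := by simp [Nat.card_eq_fintype_card]

variable [Finite Y] [Finite K] [Finite Z] [Nonempty Z]

lemma iSup_sum_le_iSup_sum_side (y : ι → Y) (k : ι → K) :
    ⨆ σ : Y → Z, ∑ i, r i (σ (y i)) ≤ ⨆ σg : Y → K → Z, ∑ i, r i (σg (y i) (k i)) :=
  ciSup_le fun σ => le_ciSup_of_le (Set.finite_range _).bddAbove (fun y _ => σ y) le_rfl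

lemma iSup_sum_side_le_natCard_mul_iSup_sum (hr : ∀ i z, 0 ≤ r i z) (y : ι → Y) (k : ι → K) :
    ⨆ σg : Y → K → Z, ∑ i, r i (σg (y i) (k i)) ≤ Nat.card K * ⨆ σ : Y → Z, ∑ i, r i (σ (y i)) :=
  ciSup_le fun σg => by
    obtain ⟨σ, hσ⟩ := exists_sum_side_le_natCard_mul_sum hr y k σg
    exact hσ.trans <| mul_le_mul_of_nonneg_left
      (le_ciSup (f := fun σ : Y → Z => ∑ i, r i (σ (y i))) (Set.finite_range _).bddAbove σ)
      (Nat.cast_nonneg _)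

end SideInformation

lemma Real.logb_sub_logb_mem_Icc {c a b L : ℝ} (hc : 1 < c) (hL : 1 ≤ L) (ha : 0 ≤ a)
    (hab : a ≤ b) (hb : b ≤ L * a) : logb c b - logb c a ∈ Set.Icc 0 (logb c L) := by
  rcases ha.eq_or_lt with rfl | ha
  · obtain rfl : b = 0 := le_antisymm (by simpa using hb) hab
    simpa using Real.logb_nonneg hc hL
  constructor
  · exact sub_nonneg.mpr (Real.logb_le_logb_of_le hc ha hab)
  · calc logb c b - logb c a ≤ logb c (L * a) - logb c a :=
          sub_le_sub_right (Real.logb_le_logb_of_le hc (ha.trans_le hab) hb) _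
      _ = logb c L := by rw [Real.logb_mul (by positivity) ha.ne']; ring

-- This includes the junk cases: `S` is empty (resp. unbounded above) iff `T` is, and then both
-- suprema are `0`.
lemma Real.sSup_eq_of_forall_sub_mem {S T : Set ℝ} (hST : ∀ a ∈ S, ∀ ε > 0, a - ε ∈ T)
    (hTS : ∀ a ∈ T, ∀ ε > 0, a - ε ∈ S) : sSup S = sSup T := by
  have key : ∀ S T : Set ℝ, (∀ a ∈ S, ∀ ε > 0, a - ε ∈ T) → (∀ a ∈ T, ∀ ε > 0, a - ε ∈ S) →
      sSup S ≤ sSup T := by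
    intro S T hST hTS
    rcases S.eq_empty_or_nonempty with rfl | hS
    · obtain rfl : T = ∅ := Set.eq_empty_of_forall_notMem fun a ha => by
        simpa using hTS a ha 1 one_pos
      rfl
    by_cases hT : BddAbove T
    · exact csSup_le hS fun a ha => le_of_forall_pos_le_add fun ε hε => by
        linarith [le_csSup hT (hST a ha ε hε)]
    · have hS' : ¬BddAbove S := fun ⟨b, hb⟩ => hT ⟨b + 1, fun a ha => by
        linarith [hb (hTS a ha 1 one_pos)]⟩
      rw [Real.sSup_of_not_bddAbove hS', Real.sSup_of_not_bddAbove hT]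
  exact le_antisymm (key S T hST hTS) (key T S hTS hST)

section LiminfLimsup

variable {α : Type*} {f : Filter α} {u v : α → ℝ}

lemma Real.liminf_eq_of_tendsto_sub (h : Tendsto (fun x => u x - v x) f (𝓝 0)) :
    liminf u f = liminf v f := by
  have shift : ∀ u v : α → ℝ, Tendsto (fun x => u x - v x) f (𝓝 0) →
      ∀ a, (∀ᶠ x in f, a ≤ u x) → ∀ ε > 0, ∀ᶠ x in f, a - ε ≤ v x := by
    intro u v h a ha ε hε
    filter_upwards [ha, h.eventually (gt_mem_nhds hε)] with x hx hx'
    linarith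
  have h' : Tendsto (fun x => v x - u x) f (𝓝 0) := by simpa only [neg_sub, neg_zero] using h.neg
  rw [liminf_eq, liminf_eq]
  exact Real.sSup_eq_of_forall_sub_mem (shift u v h) (shift v u h')

lemma Real.limsup_eq_of_tendsto_sub (h : Tendsto (fun x => u x - v x) f (𝓝 0)) :
    limsup u f = limsup v f := by
  have shift : ∀ u v : α → ℝ, Tendsto (fun x => u x - v x) f (𝓝 0) →
      ∀ a ∈ -{a | ∀ᶠ x in f, u x ≤ a}, ∀ ε > 0, a - ε ∈ -{a | ∀ᶠ x in f, v x ≤ a} := by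
    intro u v h a ha ε hε
    filter_upwards [ha, h.eventually (lt_mem_nhds (neg_neg_of_pos hε))] with x hx hx'
    linarith
  have h' : Tendsto (fun x => v x - u x) f (𝓝 0) := by simpa only [neg_sub, neg_zero] using h.neg
  rw [limsup_eq, limsup_eq, Real.sInf_def, Real.sInf_def, neg_inj]
  exact Real.sSup_eq_of_forall_sub_mem (shift u v h) (shift v u h')

end LiminfLimsup

lemma tendsto_inv_mul_logb_add_one (k : ℝ) :
    Tendsto (fun n : ℕ => (n : ℝ)⁻¹ * (k * Real.logb 2 (n + 1))) atTop (𝓝 0) := by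
  have h := (Real.tendsto_pow_log_div_mul_add_atTop 1 (-1) 1 one_ne_zero).comp
    (tendsto_atTop_add_const_right atTop 1 tendsto_natCast_atTop_atTop)
  have := h.const_mul (k / Real.log 2)
  simp only [mul_zero] at this
  refine this.congr fun n => ?_
  simp [Real.logb]
  ring

lemma exponent_gap_mem_Icc {𝓧 𝓩 : Type*} [Fintype 𝓧] [DecidableEq 𝓧] [Fintype 𝓩] [Nonempty 𝓩]
    (dE : 𝓧 → 𝓩 → ℝ) (D : ℝ) {n M : ℕ} {p : (Fin n → 𝓧) × Fin M → ℝ} (hp : ∀ t, 0 ≤ p t) :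
    -(n : ℝ)⁻¹ * Real.logb 2
        (⨆ σ : Fin M → (Fin n → 𝓩), ∑ t, p t * ind (seqDist dE t.1 (σ t.2) ≤ D))
      - -(n : ℝ)⁻¹ * Real.logb 2
        (⨆ σg : Fin M → {Q : 𝓧 → ℝ // Q ∈ typeSet 𝓧 n} → (Fin n → 𝓩),
          ∑ t, p t * ind (seqDist dE t.1 (σg t.2 ⟨empDist t.1, ⟨t.1, rfl⟩⟩) ≤ D))
      ∈ Set.Icc 0 ((n : ℝ)⁻¹ * (Fintype.card 𝓧 * Real.logb 2 (n + 1))) := by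
  set r : (Fin n → 𝓧) × Fin M → (Fin n → 𝓩) → ℝ := fun t z => p t * ind (seqDist dE t.1 z ≤ D)
  have hr : ∀ t z, 0 ≤ r t z := fun t z => mul_nonneg (hp t) (ind_nonneg _)
  set k : (Fin n → 𝓧) × Fin M → typeSet 𝓧 n := fun t => ⟨empDist t.1, t.1, rfl⟩
  set a := ⨆ σ : Fin M → (Fin n → 𝓩), ∑ t, r t (σ t.2)
  set b := ⨆ σg : Fin M → typeSet 𝓧 n → (Fin n → 𝓩), ∑ t, r t (σg t.2 (k t))
  have ha : 0 ≤ a := Real.iSup_nonneg fun σ => Finset.sum_nonneg fun t _ => hr t _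
  have hcard : ((typeSet 𝓧 n).ncard : ℝ) ≤ ((n : ℝ) + 1) ^ Fintype.card 𝓧 := by
    exact_mod_cast ncard_typeSet_le 𝓧 n
  have hba : b ≤ ((n : ℝ) + 1) ^ Fintype.card 𝓧 * a :=
    (iSup_sum_side_le_natCard_mul_iSup_sum hr Prod.snd k).trans
      (mul_le_mul_of_nonneg_right hcard ha)
  obtain ⟨hgap₀, hgap₁⟩ := Real.logb_sub_logb_mem_Icc one_lt_two
    (one_le_pow₀ (le_add_of_nonneg_left n.cast_nonneg)) ha
    (iSup_sum_le_iSup_sum_side Prod.snd k) hba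
  rw [Real.logb_pow] at hgap₁
  have hdiff : -(n : ℝ)⁻¹ * Real.logb 2 a - -(n : ℝ)⁻¹ * Real.logb 2 b
      = (n : ℝ)⁻¹ * (Real.logb 2 b - Real.logb 2 a) := by ring
  rw [hdiff]
  exact ⟨mul_nonneg (by positivity) hgap₀, mul_le_mul_of_nonneg_left hgap₁ (by positivity)⟩

theorem type_awareness_does_not_help_general
    {𝓧 𝓩 : Type*} [Fintype 𝓧] [DecidableEq 𝓧] [Fintype 𝓩] [Nonempty 𝓩]
    (dE : 𝓧 → 𝓩 → ℝ) (D : ℝ)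
    (m : ℕ → ℕ) (p : ∀ n, (Fin n → 𝓧) × Fin (m n) → ℝ) (hp : ∀ n, IsDist (p n)) :
    (∀ (n : ℕ)
        (σg : Fin (m n) → {Q : 𝓧 → ℝ // Q ∈ typeSet 𝓧 n} → (Fin n → 𝓩)),
      ∃ σ : Fin (m n) → (Fin n → 𝓩),
        ((typeSet 𝓧 n).ncard : ℝ)⁻¹ *
            (∑ t : (Fin n → 𝓧) × Fin (m n),
              p n t * ind (seqDist dE t.1 (σg t.2 ⟨empDist t.1, ⟨t.1, rfl⟩⟩) ≤ D))
          ≤ ∑ t : (Fin n → 𝓧) × Fin (m n),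
              p n t * ind (seqDist dE t.1 (σ t.2) ≤ D)) ∧
    Filter.liminf (fun n : ℕ =>
        -(n : ℝ)⁻¹ * Real.logb 2
          (⨆ σ : Fin (m n) → (Fin n → 𝓩),
            ∑ t : (Fin n → 𝓧) × Fin (m n), p n t * ind (seqDist dE t.1 (σ t.2) ≤ D)))
        Filter.atTop
      = Filter.liminf (fun n : ℕ =>
        -(n : ℝ)⁻¹ * Real.logb 2
          (⨆ σg : Fin (m n) → {Q : 𝓧 → ℝ // Q ∈ typeSet 𝓧 n} → (Fin n → 𝓩),
            ∑ t : (Fin n → 𝓧) × Fin (m n),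
              p n t * ind (seqDist dE t.1 (σg t.2 ⟨empDist t.1, ⟨t.1, rfl⟩⟩) ≤ D)))
        Filter.atTop ∧
    Filter.limsup (fun n : ℕ =>
        -(n : ℝ)⁻¹ * Real.logb 2
          (⨆ σ : Fin (m n) → (Fin n → 𝓩),
            ∑ t : (Fin n → 𝓧) × Fin (m n), p n t * ind (seqDist dE t.1 (σ t.2) ≤ D)))
        Filter.atTop
      = Filter.limsup (fun n : ℕ =>
        -(n : ℝ)⁻¹ * Real.logb 2
          (⨆ σg : Fin (m n) → {Q : 𝓧 → ℝ // Q ∈ typeSet 𝓧 n} → (Fin n → 𝓩),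
            ∑ t : (Fin n → 𝓧) × Fin (m n),
              p n t * ind (seqDist dE t.1 (σg t.2 ⟨empDist t.1, ⟨t.1, rfl⟩⟩) ≤ D)))
        Filter.atTop := by
  have hr : ∀ n t z, 0 ≤ p n t * ind (seqDist dE t.1 z ≤ D) :=
    fun n t z => mul_nonneg ((hp n).1 t) (ind_nonneg _)
  refine ⟨fun n σg => ?_, ?_⟩
  · obtain ⟨σ, hσ⟩ := exists_sum_side_le_natCard_mul_sum (hr n) Prod.snd
      (fun t => (⟨empDist t.1, t.1, rfl⟩ : typeSet 𝓧 n)) σg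
    exact ⟨σ, inv_mul_le_of_le_mul₀ (Nat.cast_nonneg _) (Finset.sum_nonneg fun t _ => hr n t _) hσ⟩
  · have gap (n : ℕ) := exponent_gap_mem_Icc (𝓩 := 𝓩) dE D (hp n).1
    have hgap := squeeze_zero (fun n => (gap n).1) (fun n => (gap n).2)
      (tendsto_inv_mul_logb_add_one (Fintype.card 𝓧))
    exact ⟨Real.liminf_eq_of_tendsto_sub hgap, Real.limsup_eq_of_tendsto_sub hgap⟩

/-- **Type awareness does not help the eavesdropper.** For every `n` and every genie-aided
eavesdropper (which also observes the type of the source block) there is a plain eavesdropper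
whose exiguous-distortion probability is smaller by at most the factor `|𝒫_n(𝒳)|`;
consequently the liminf and limsup exiguous-distortion exponents over plain and genie-aided
eavesdroppers coincide. -/
theorem type_awareness_does_not_help
    {𝓧 𝓩 : Type*} [Fintype 𝓧] [DecidableEq 𝓧] [Fintype 𝓩] [Nonempty 𝓩]
    (dE : 𝓧 → 𝓩 → ℝ) (D : ℝ) (hD : 0 ≤ D)
    (m : ℕ → ℕ) (p : ∀ n, (Fin n → 𝓧) × Fin (m n) → ℝ) (hp : ∀ n, IsDist (p n)) :
    (∀ (n : ℕ)
        (σg : Fin (m n) → {Q : 𝓧 → ℝ // Q ∈ typeSet 𝓧 n} → (Fin n → 𝓩)),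
      ∃ σ : Fin (m n) → (Fin n → 𝓩),
        ((typeSet 𝓧 n).ncard : ℝ)⁻¹ *
            (∑ t : (Fin n → 𝓧) × Fin (m n),
              p n t * ind (seqDist dE t.1 (σg t.2 ⟨empDist t.1, ⟨t.1, rfl⟩⟩) ≤ D))
          ≤ ∑ t : (Fin n → 𝓧) × Fin (m n),
              p n t * ind (seqDist dE t.1 (σ t.2) ≤ D)) ∧
    Filter.liminf (fun n : ℕ =>
        -(n : ℝ)⁻¹ * Real.logb 2
          (⨆ σ : Fin (m n) → (Fin n → 𝓩),
            ∑ t : (Fin n → 𝓧) × Fin (m n), p n t * ind (seqDist dE t.1 (σ t.2) ≤ D)))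
        Filter.atTop
      = Filter.liminf (fun n : ℕ =>
        -(n : ℝ)⁻¹ * Real.logb 2
          (⨆ σg : Fin (m n) → {Q : 𝓧 → ℝ // Q ∈ typeSet 𝓧 n} → (Fin n → 𝓩),
            ∑ t : (Fin n → 𝓧) × Fin (m n),
              p n t * ind (seqDist dE t.1 (σg t.2 ⟨empDist t.1, ⟨t.1, rfl⟩⟩) ≤ D)))
        Filter.atTop ∧
    Filter.limsup (fun n : ℕ =>
        -(n : ℝ)⁻¹ * Real.logb 2
          (⨆ σ : Fin (m n) → (Fin n → 𝓩),
            ∑ t : (Fin n → 𝓧) × Fin (m n), p n t * ind (seqDist dE t.1 (σ t.2) ≤ D)))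
        Filter.atTop
      = Filter.limsup (fun n : ℕ =>
        -(n : ℝ)⁻¹ * Real.logb 2
          (⨆ σg : Fin (m n) → {Q : 𝓧 → ℝ // Q ∈ typeSet 𝓧 n} → (Fin n → 𝓩),
            ∑ t : (Fin n → 𝓧) × Fin (m n),
              p n t * ind (seqDist dE t.1 (σg t.2 ⟨empDist t.1, ⟨t.1, rfl⟩⟩) ≤ D)))
        Filter.atTop :=
  type_awareness_does_not_help_general dE D m p hp

end
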